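/- Let K be a number field of discriminant Δ_K with exactly s pairs of complex embeddings (i.e., s complex infinite places), and let (𝔟, (t₁, …, tₙ)) be an f-representation. Then 𝒪_K ⊆ 𝔟 (equivalently, 𝔟⁻¹ is an integral ideal), tᵢ ≥ 0 for all 1 ≤ i ≤ n, and 0 ≤ −log N(𝔟) + Σᵢ₌₁ⁿ tᵢ·deg(wᵢ) ≤ (1/2)·log|Δ_K| − s·log(π/2), where N(𝔟) is the absolute norm of the fractional ideal 𝔟 and deg(w) = 1 if the infinite place w is real and deg(w) = 2 if w is complex. -/

import Mathlib

/-! Since `1 ∈ 𝔟`, the ideal `𝔟⁻¹` is integral, so `N(𝔟) ≤ 1`, and `wᵢ(1) = 1 ≤ exp tᵢ` gives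
`tᵢ ≥ 0`; this yields the lower bound. If the upper bound failed, the box
`{w₀ < 1, wᵢ < exp tᵢ}` would have volume larger than Minkowski's bound for the lattice `𝔟`,
so it would contain some nonzero `a ∈ 𝔟`. Such an `a` lies in `B(𝔟, (t, 0))` and has
`w₀(a) < 1 = w₀(1)`, contradicting the minimality of `1`. -/

open NumberField
open scoped nonZeroDivisors

/-- Lexicographic comparison of real tuples: `a ≤ₗₑₓ b`. -/
def lexLe {m : ℕ} (a b : Fin m → ℝ) : Prop :=
  a = b ∨ ∃ i : Fin m, a i < b i ∧ ∀ j : Fin m, j < i → a j = b j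

/-- The vector of absolute values of `h` at the infinite places, the distinguished place `w₀`
first. -/
def absVec {K : Type*} [Field K] [NumberField K] {n : ℕ}
    (w₀ : InfinitePlace K) (w : Fin n → InfinitePlace K) (h : K) : Fin (n + 1) → ℝ :=
  Fin.cons (w₀ h) (fun i => w i h)

/-- The total preorder `≼` on `K^*`: `h ≼ h'` iff the vector of absolute values of `h` is
lexicographically at most that of `h'` (distinguished place first). -/
def preceq {K : Type*} [Field K] [NumberField K] {n : ℕ}
    (w₀ : InfinitePlace K) (w : Fin n → InfinitePlace K) (h h' : K) : Prop :=
  lexLe (absVec w₀ w h) (absVec w₀ w h')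

/-- The box `B(𝔟, (t, ℓ)) = {h ∈ 𝔟 : w₀(h) ≤ exp ℓ and wᵢ(h) ≤ exp tᵢ for 1 ≤ i ≤ n}`. -/
def box {K : Type*} [Field K] [NumberField K] {n : ℕ}
    (w₀ : InfinitePlace K) (w : Fin n → InfinitePlace K)
    (𝔟 : FractionalIdeal (𝓞 K)⁰ K) (t : Fin n → ℝ) (ℓ : ℝ) : Set K :=
  {h : K | h ∈ 𝔟 ∧ w₀ h ≤ Real.exp ℓ ∧ ∀ i : Fin n, w i h ≤ Real.exp (t i)}

/-- A pair `(𝔟, t)` is an *f-representation* if `1 ∈ B(𝔟, (t, 0))` and `1` is a smallest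
element of `B(𝔟, (t, 0)) ∖ {0}` with respect to `≼`. -/
def IsFRep {K : Type*} [Field K] [NumberField K] {n : ℕ}
    (w₀ : InfinitePlace K) (w : Fin n → InfinitePlace K)
    (𝔟 : FractionalIdeal (𝓞 K)⁰ K) (t : Fin n → ℝ) : Prop :=
  (1 : K) ∈ box w₀ w 𝔟 t 0 ∧
  ∀ h ∈ box w₀ w 𝔟 t 0, h ≠ 0 → preceq w₀ w 1 h

open NumberField.InfinitePlace NumberField.mixedEmbedding Real

theorem FractionalIdeal.absNorm_le_one_of_one_le {R K : Type*} [CommRing R] [IsDedekindDomain R]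
    [Module.Free ℤ R] [Module.Finite ℤ R] [Field K] [Algebra R K] [IsFractionRing R K]
    {I : FractionalIdeal R⁰ K} (hI : 1 ≤ I) : absNorm I ≤ 1 := by
  have h₁ : (1 : FractionalIdeal R⁰ K) ≠ 0 := one_ne_zero
  have hI₀ : I ≠ 0 := ne_bot_of_le_ne_bot h₁ hI
  have hinv : I⁻¹ ≤ 1 := by simpa using inv_anti_mono h₁ hI₀ hI
  obtain ⟨J, hJ⟩ := le_one_iff_exists_coeIdeal.mp hinv
  have hmul : absNorm I * Ideal.absNorm J = 1 := by
    rw [← coeIdeal_absNorm (K := K), hJ, ← map_mul, mul_inv_cancel₀ hI₀, absNorm_one]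
  have hJ₁ : (1 : ℚ) ≤ Ideal.absNorm J := by
    exact_mod_cast Nat.one_le_iff_ne_zero.mpr (by rintro h; simp [h] at hmul)
  nlinarith [absNorm_nonneg I]

namespace NumberField.mixedEmbedding

variable {K : Type*} [Field K] [NumberField K]

theorem minkowskiBound_toReal (I : (FractionalIdeal (𝓞 K)⁰ K)ˣ) :
    (minkowskiBound K I).toReal = 2 ^ (nrRealPlaces K + nrComplexPlaces K) *
      (√|(discr K : ℝ)| * ((FractionalIdeal.absNorm (I : FractionalIdeal (𝓞 K)⁰ K) : ℚ) : ℝ)) := by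
  rw [minkowskiBound, volume_fundamentalDomain_fractionalIdealLatticeBasis,
    volume_fundamentalDomain_latticeBasis]
  simp only [ENNReal.toReal_mul, ENNReal.toReal_pow, ENNReal.toReal_inv, ENNReal.toReal_ofNat,
    ENNReal.coe_toReal, mixedEmbedding.finrank]
  rw [ENNReal.toReal_ofReal (by exact_mod_cast FractionalIdeal.absNorm_nonneg _),
    ← card_add_two_mul_card_eq_rank, Real.coe_sqrt, coe_nnnorm, Int.norm_eq_abs,
    pow_add, pow_add, two_mul, pow_add, inv_pow]
  field_simp

open scoped Classical in
theorem convexBodyLT_volume_toReal (f : InfinitePlace K → NNReal) :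
    (MeasureTheory.volume (convexBodyLT K f)).toReal =
      2 ^ nrRealPlaces K * (π ^ nrComplexPlaces K * ∏ v, (f v : ℝ) ^ v.mult) := by
  rw [convexBodyLT_volume, ENNReal.toReal_mul, ENNReal.coe_toReal, ENNReal.coe_toReal]
  push_cast [NNReal.coe_real_pi]
  ring

theorem exists_ne_zero_mem_lt_exp (I : (FractionalIdeal (𝓞 K)⁰ K)ˣ) (r : InfinitePlace K → ℝ)
    (h : (1 / 2) * log |(discr K : ℝ)| - nrComplexPlaces K * log (π / 2) +
      log ((FractionalIdeal.absNorm (I : FractionalIdeal (𝓞 K)⁰ K) : ℚ) : ℝ) <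
        ∑ v, r v * v.mult) :
    ∃ a ∈ (I : FractionalIdeal (𝓞 K)⁰ K), a ≠ 0 ∧ ∀ v : InfinitePlace K, v a < exp (r v) := by
  set N : ℝ := ((FractionalIdeal.absNorm (I : FractionalIdeal (𝓞 K)⁰ K) : ℚ) : ℝ)
  set Δ : ℝ := |(discr K : ℝ)|
  set s := nrComplexPlaces K
  have hN : 0 < N := by
    have := (FractionalIdeal.absNorm_nonneg (I : FractionalIdeal (𝓞 K)⁰ K)).lt_of_ne
      fun h ↦ I.ne_zero (FractionalIdeal.absNorm_eq_zero_iff.mp h.symm)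
    exact Rat.cast_pos.mpr this
  have hΔ : 0 < Δ := abs_pos.mpr (by exact_mod_cast discr_ne_zero K)
  have key : 2 ^ s * (√Δ * N) < π ^ s * exp (∑ v, r v * v.mult) := by
    rw [← exp_log (by positivity : 0 < 2 ^ s * (√Δ * N)),
      ← exp_log (by positivity : 0 < π ^ s * exp (∑ v, r v * v.mult)), exp_lt_exp,
      log_mul, log_mul, log_mul, log_sqrt, log_pow, log_pow, log_exp]
    · rw [log_div pi_ne_zero two_ne_zero] at h
      linarith
    all_goals positivity
  let f : InfinitePlace K → NNReal := fun v => ⟨exp (r v), (exp_pos _).le⟩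
  have hf : ∏ v, (f v : ℝ) ^ v.mult = exp (∑ v, r v * v.mult) := by
    rw [exp_sum]
    exact Finset.prod_congr rfl fun v _ ↦ by rw [mul_comm, exp_nat_mul]; rfl
  refine exists_ne_zero_mem_ideal_lt K I (f := f) ?_
  rw [← ENNReal.toReal_lt_toReal (minkowskiBound_lt_top K I).ne
      (by rw [convexBodyLT_volume]; finiteness),
    minkowskiBound_toReal, convexBodyLT_volume_toReal, pow_add, mul_assoc, hf]
  exact mul_lt_mul_of_pos_left key (by positivity)

end NumberField.mixedEmbedding

theorem not_lexLe_of_lt_zero {m : ℕ} {a b : Fin (m + 1) → ℝ} (h : b 0 < a 0) : ¬ lexLe a b := by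
  rintro (rfl | ⟨i, hlt, heq⟩)
  · exact lt_irrefl _ h
  · rcases eq_or_ne i 0 with rfl | hi
    · exact lt_asymm h hlt
    · exact h.ne' (heq 0 (Fin.pos_iff_ne_zero.mpr hi))

theorem not_preceq_one_of_lt_one {K : Type*} [Field K] [NumberField K] {n : ℕ}
    (w₀ : InfinitePlace K) (w : Fin n → InfinitePlace K) {a : K} (ha : w₀ a < 1) :
    ¬ preceq w₀ w 1 a :=
  not_lexLe_of_lt_zero (by simpa [absVec] using ha)

theorem Function.Bijective.exists_comp_cons_eq {α β : Type*} {n : ℕ} {a₀ : α} {a : Fin n → α}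
    (ha : Function.Bijective (Fin.cons a₀ a : Fin (n + 1) → α)) (b₀ : β) (b : Fin n → β) :
    ∃ r : α → β, r a₀ = b₀ ∧ ∀ i, r (a i) = b i := by
  let e := Equiv.ofBijective _ ha
  refine ⟨Fin.cons b₀ b ∘ e.symm, ?_, fun i ↦ ?_⟩
  · change (Fin.cons b₀ b : Fin (n + 1) → β) (e.symm (e 0)) = b₀
    rw [e.symm_apply_apply, Fin.cons_zero]
  · change (Fin.cons b₀ b : Fin (n + 1) → β) (e.symm (e i.succ)) = b i
    rw [e.symm_apply_apply, Fin.cons_succ]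

theorem stmt16_general {K : Type*} [Field K] [NumberField K] {n : ℕ}
    (w₀ : InfinitePlace K) (w : Fin n → InfinitePlace K)
    (hw : Function.Bijective (Fin.cons w₀ w : Fin (n + 1) → InfinitePlace K))
    (𝔟 : FractionalIdeal (𝓞 K)⁰ K) (t : Fin n → ℝ)
    (hfrep : IsFRep w₀ w 𝔟 t) :
    (1 : FractionalIdeal (𝓞 K)⁰ K) ≤ 𝔟 ∧ (∀ i : Fin n, 0 ≤ t i) ∧
    0 ≤ -Real.log ((FractionalIdeal.absNorm 𝔟 : ℚ) : ℝ) +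
        ∑ i : Fin n, t i * ((w i).mult : ℝ) ∧
    -Real.log ((FractionalIdeal.absNorm 𝔟 : ℚ) : ℝ) +
        ∑ i : Fin n, t i * ((w i).mult : ℝ) ≤
      (1 / 2) * Real.log |((NumberField.discr K : ℤ) : ℝ)| -
        (NumberField.InfinitePlace.nrComplexPlaces K : ℝ) * Real.log (Real.pi / 2) := by
  obtain ⟨⟨h1mem, -, h1t⟩, hmin⟩ := hfrep
  have hle : 1 ≤ 𝔟 := FractionalIdeal.one_le.mpr h1mem
  have ht : ∀ i, 0 ≤ t i := fun i ↦ by simpa using h1t i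
  have hlogN : log ((FractionalIdeal.absNorm 𝔟 : ℚ) : ℝ) ≤ 0 :=
    log_nonpos (Rat.cast_nonneg.mpr (FractionalIdeal.absNorm_nonneg 𝔟))
      (by exact_mod_cast FractionalIdeal.absNorm_le_one_of_one_le hle)
  have hsum : 0 ≤ ∑ i, t i * ((w i).mult : ℝ) :=
    Finset.sum_nonneg fun i _ ↦ mul_nonneg (ht i) (Nat.cast_nonneg _)
  refine ⟨hle, ht, by linarith, ?_⟩
  by_contra! hcon
  obtain ⟨r, hr₀, hr⟩ := hw.exists_comp_cons_eq (0 : ℝ) t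
  have hsum_r : ∑ v, r v * v.mult = ∑ i, t i * ((w i).mult : ℝ) := by
    rw [← hw.sum_comp, Fin.sum_univ_succ]
    simp [hr₀, hr]
  let I := Units.mk0 𝔟 (ne_bot_of_le_ne_bot (one_ne_zero' _) hle)
  obtain ⟨a, ha, ha₀, hlt⟩ :=
    exists_ne_zero_mem_lt_exp I r (by rw [hsum_r, Units.val_mk0]; linarith)
  have haw₀ : w₀ a < 1 := by simpa [hr₀] using hlt w₀
  have hbox : a ∈ box w₀ w 𝔟 t 0 :=
    ⟨ha, by simpa using haw₀.le, fun i ↦ by simpa [hr] using (hlt (w i)).le⟩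
  exact not_preceq_one_of_lt_one w₀ w haw₀ (hmin a hbox ha₀)

/-- Let `K` be a number field of discriminant `Δ_K` with `s` complex infinite
places, and let `(𝔟, (t₁, …, tₙ))` be an f-representation. Then `𝒪_K ⊆ 𝔟`, `tᵢ ≥ 0` for all
`i`, and `0 ≤ −log N(𝔟) + Σᵢ tᵢ·deg(wᵢ) ≤ (1/2)·log |Δ_K| − s·log(π/2)`, where `deg(w)` is
`1` for a real place and `2` for a complex one (the multiplicity `mult`). -/
theorem stmt16 {K : Type*} [Field K] [NumberField K] {n : ℕ}
    (w₀ : InfinitePlace K) (w : Fin n → InfinitePlace K)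
    (hw : Function.Bijective (Fin.cons w₀ w : Fin (n + 1) → InfinitePlace K))
    (𝔟 : FractionalIdeal (𝓞 K)⁰ K) (h𝔟 : 𝔟 ≠ 0) (t : Fin n → ℝ)
    (hfrep : IsFRep w₀ w 𝔟 t) :
    (1 : FractionalIdeal (𝓞 K)⁰ K) ≤ 𝔟 ∧ (∀ i : Fin n, 0 ≤ t i) ∧
    0 ≤ -Real.log ((FractionalIdeal.absNorm 𝔟 : ℚ) : ℝ) +
        ∑ i : Fin n, t i * ((w i).mult : ℝ) ∧
    -Real.log ((FractionalIdeal.absNorm 𝔟 : ℚ) : ℝ) +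
        ∑ i : Fin n, t i * ((w i).mult : ℝ) ≤
      (1 / 2) * Real.log |((NumberField.discr K : ℤ) : ℝ)| -
        (NumberField.InfinitePlace.nrComplexPlaces K : ℝ) * Real.log (Real.pi / 2) :=
  stmt16_general w₀ w hw 𝔟 t hfrep
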